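/- arXiv:1211.2223 — 6 statements merged into one kernel-verified Lean document; each statement's English description precedes it below -/
import Mathlib

section
/- Let N ≥ 1, let ξ ∈ C⁴(ℝ^N) and let η ∈ C_c^∞(ℝ^N). Then ∫_{ℝ^N} (Δ²ξ) ξ η² dx = ∫_{ℝ^N} [Δ(ξη)]² dx + ∫_{ℝ^N} [−4(∇ξ · ∇η)² + 2 ξ (Δξ) |∇η|²] dx + ∫_{ℝ^N} ξ² [2 ∇(Δη) · ∇η + (Δη)²] dx. -/
open MeasureTheory Real

/-- The Laplacian of a function on `ℝ^N` (sum of pure second derivatives). -/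
noncomputable def lap {N : ℕ} (u : EuclideanSpace ℝ (Fin N) → ℝ)
    (x : EuclideanSpace ℝ (Fin N)) : ℝ :=
  ∑ i : Fin N, fderiv ℝ (fun y => fderiv ℝ u y (EuclideanSpace.single i 1)) x
    (EuclideanSpace.single i 1)
/-- The dot product of the gradients of two functions on `ℝ^N`. -/
noncomputable def gradDot {N : ℕ} (f g : EuclideanSpace ℝ (Fin N) → ℝ)
    (x : EuclideanSpace ℝ (Fin N)) : ℝ :=
  ∑ i : Fin N, fderiv ℝ f x (EuclideanSpace.single i 1) *
    fderiv ℝ g x (EuclideanSpace.single i 1)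

/-!
Writing `φ = ξ η²` and `ψ = ξ² Δη`, the product rules for `Δ` and `∇` give the pointwise identity
`(Δ²ξ) ξ η² = [Δ(ξη)]² + [−4(∇ξ·∇η)² + 2ξ(Δξ)|∇η|²] + ξ²[2∇(Δη)·∇η + (Δη)²]
  + div(φ ∇Δξ) − div(Δξ ∇φ) − 2 div(ψ ∇η)`,
and the three divergences are of compactly supported `C¹` vector fields, so they integrate to zero.
-/

theorem integral_fderiv_apply_eq_zero {E : Type*} [NormedAddCommGroup E] [NormedSpace ℝ E]
    [FiniteDimensional ℝ E] [MeasurableSpace E] [BorelSpace E] {μ : Measure E} [μ.IsAddHaarMeasure]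
    {f : E → ℝ} (hf : ContDiff ℝ 1 f) (hc : HasCompactSupport f) (v : E) :
    ∫ x, fderiv ℝ f x v ∂μ = 0 := by
  have hf' : Continuous fun x => fderiv ℝ f x v :=
    (hf.continuous_fderiv one_ne_zero).clm_apply continuous_const
  have h := integral_mul_fderiv_eq_neg_fderiv_mul_of_integrable (μ := μ)
    (f := fun _ => (1 : ℝ)) (g := f) (v := v)
    (by simp) (by simpa using hf'.integrable_of_hasCompactSupport (hc.fderiv_apply ℝ v))
    (by simpa using hf.continuous.integrable_of_hasCompactSupport hc)
    (fun x _ => differentiableAt_const _) (fun x _ => hf.differentiable one_ne_zero x)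
  simpa using h

section

variable {N : ℕ}

noncomputable def partialDeriv (i : Fin N) (f : EuclideanSpace ℝ (Fin N) → ℝ)
    (x : EuclideanSpace ℝ (Fin N)) : ℝ :=
  fderiv ℝ f x (EuclideanSpace.single i 1)

noncomputable def divMulGrad (f g : EuclideanSpace ℝ (Fin N) → ℝ)
    (x : EuclideanSpace ℝ (Fin N)) : ℝ :=
  gradDot f g x + f x * lap g x

variable {f g h : EuclideanSpace ℝ (Fin N) → ℝ} {x : EuclideanSpace ℝ (Fin N)}

theorem lap_eq_sum_partialDeriv (f : EuclideanSpace ℝ (Fin N) → ℝ) (x) :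
    lap f x = ∑ i, partialDeriv i (partialDeriv i f) x := rfl

theorem gradDot_eq_sum_partialDeriv (f g : EuclideanSpace ℝ (Fin N) → ℝ) (x) :
    gradDot f g x = ∑ i, partialDeriv i f x * partialDeriv i g x := rfl

theorem gradDot_comm (f g : EuclideanSpace ℝ (Fin N) → ℝ) (x) : gradDot f g x = gradDot g f x := by
  simp only [gradDot_eq_sum_partialDeriv, mul_comm]

theorem ContDiff.partialDeriv {n m : WithTop ℕ∞} (hf : ContDiff ℝ n f) (h : m + 1 ≤ n)
    (i : Fin N) : ContDiff ℝ m (partialDeriv i f) :=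
  (hf.fderiv_right h).clm_apply contDiff_const

theorem ContDiff.lap {n m : WithTop ℕ∞} (hf : ContDiff ℝ n f) (h : m + 2 ≤ n) :
    ContDiff ℝ m (lap f) := by
  rw [← one_add_one_eq_two, ← add_assoc] at h
  exact ContDiff.sum fun i _ => (hf.partialDeriv h i).partialDeriv le_rfl i

theorem ContDiff.gradDot {n m : WithTop ℕ∞} (hf : ContDiff ℝ n f) (hg : ContDiff ℝ n g)
    (h : m + 1 ≤ n) : ContDiff ℝ m (gradDot f g) :=
  ContDiff.sum fun i _ => (hf.partialDeriv h i).mul (hg.partialDeriv h i)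

theorem partialDeriv_add (i : Fin N) (hf : DifferentiableAt ℝ f x)
    (hg : DifferentiableAt ℝ g x) :
    partialDeriv i (fun y => f y + g y) x = partialDeriv i f x + partialDeriv i g x := by
  simp [partialDeriv, fderiv_fun_add hf hg]

theorem partialDeriv_mul (i : Fin N) (hf : DifferentiableAt ℝ f x)
    (hg : DifferentiableAt ℝ g x) :
    partialDeriv i (fun y => f y * g y) x
      = f x * partialDeriv i g x + partialDeriv i f x * g x := by
  simp [partialDeriv, fderiv_fun_mul hf hg, mul_comm]

theorem lap_mul (hf : ContDiff ℝ 2 f) (hg : ContDiff ℝ 2 g) (x) :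
    lap (fun y => f y * g y) x = f x * lap g x + 2 * gradDot f g x + g x * lap f x := by
  have hf1 : Differentiable ℝ f := hf.differentiable two_ne_zero
  have hg1 : Differentiable ℝ g := hg.differentiable two_ne_zero
  have hf2 i : Differentiable ℝ (partialDeriv i f) :=
    (hf.partialDeriv (m := 1) le_rfl i).differentiable one_ne_zero
  have hg2 i : Differentiable ℝ (partialDeriv i g) :=
    (hg.partialDeriv (m := 1) le_rfl i).differentiable one_ne_zero
  have hi i : partialDeriv i (partialDeriv i (fun y => f y * g y)) x
      = f x * partialDeriv i (partialDeriv i g) x + 2 * (partialDeriv i f x * partialDeriv i g x)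
        + g x * partialDeriv i (partialDeriv i f) x := by
    have h1 : partialDeriv i (fun y => f y * g y)
        = fun y => f y * partialDeriv i g y + partialDeriv i f y * g y :=
      funext fun y => partialDeriv_mul i (hf1 y) (hg1 y)
    rw [h1, partialDeriv_add i ((hf1 x).fun_mul (hg2 i x)) ((hf2 i x).fun_mul (hg1 x)),
      partialDeriv_mul i (hf1 x) (hg2 i x), partialDeriv_mul i (hf2 i x) (hg1 x)]
    ring
  simp only [lap_eq_sum_partialDeriv, gradDot_eq_sum_partialDeriv, hi, Finset.sum_add_distrib,
    Finset.mul_sum]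

theorem gradDot_mul_left (hf : DifferentiableAt ℝ f x) (hg : DifferentiableAt ℝ g x) :
    gradDot (fun y => f y * g y) h x = f x * gradDot g h x + g x * gradDot f h x := by
  simp only [gradDot_eq_sum_partialDeriv, partialDeriv_mul _ hf hg, Finset.mul_sum,
    ← Finset.sum_add_distrib]
  exact Finset.sum_congr rfl fun i _ => by ring

theorem sum_partialDeriv_mul_partialDeriv (hf : Differentiable ℝ f) (hg : ContDiff ℝ 2 g) (x) :
    ∑ i, partialDeriv i (fun y => f y * partialDeriv i g y) x = divMulGrad f g x := by
  have hg2 i : Differentiable ℝ (partialDeriv i g) :=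
    (hg.partialDeriv (m := 1) le_rfl i).differentiable one_ne_zero
  simp only [partialDeriv_mul _ (hf x) (hg2 _ x), Finset.sum_add_distrib, divMulGrad,
    lap_eq_sum_partialDeriv, gradDot_eq_sum_partialDeriv, Finset.mul_sum, add_comm]

theorem partialDeriv_eq_zero_of_notMem_tsupport (i : Fin N) (hx : x ∉ tsupport f) :
    partialDeriv i f x = 0 := by
  simp [partialDeriv, Function.notMem_support.mp fun h => hx (support_fderiv_subset ℝ h)]

theorem tsupport_partialDeriv_subset (i : Fin N) : tsupport (partialDeriv i f) ⊆ tsupport f :=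
  closure_minimal (fun _ hx => by_contra fun h => hx (partialDeriv_eq_zero_of_notMem_tsupport i h))
    (isClosed_tsupport f)

theorem lap_eq_zero_of_notMem_tsupport (hx : x ∉ tsupport f) : lap f x = 0 :=
  Finset.sum_eq_zero fun i _ =>
    partialDeriv_eq_zero_of_notMem_tsupport i fun h => hx (tsupport_partialDeriv_subset i h)

theorem gradDot_eq_zero_of_notMem_tsupport (hx : x ∉ tsupport g) : gradDot f g x = 0 :=
  Finset.sum_eq_zero fun i _ =>
    mul_eq_zero_of_right _ (partialDeriv_eq_zero_of_notMem_tsupport i hx)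

theorem HasCompactSupport.lap (hf : HasCompactSupport f) : HasCompactSupport (lap f) :=
  .intro hf fun _ => lap_eq_zero_of_notMem_tsupport

theorem integrable_divMulGrad_and_integral_eq_zero (hf : ContDiff ℝ 1 f) (hg : ContDiff ℝ 2 g)
    (hfg : ∀ i, HasCompactSupport fun y => f y * partialDeriv i g y) :
    Integrable (divMulGrad f g) ∧ ∫ x, divMulGrad f g x = 0 := by
  have hV i : ContDiff ℝ 1 fun y => f y * partialDeriv i g y :=
    hf.mul (hg.partialDeriv (by norm_num) i)
  have hdiv : divMulGrad f g = fun x => ∑ i, partialDeriv i (fun y => f y * partialDeriv i g y) x :=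
    funext fun x => (sum_partialDeriv_mul_partialDeriv (hf.differentiable one_ne_zero) hg x).symm
  have hint i : Integrable (partialDeriv i fun y => f y * partialDeriv i g y) :=
    ((hV i).partialDeriv (m := 0) (by norm_num) i).continuous.integrable_of_hasCompactSupport
      ((hfg i).fderiv_apply ℝ _)
  rw [hdiv, integral_finsetSum _ fun i _ => hint i]
  exact ⟨integrable_finsetSum _ fun i _ => hint i,
    Finset.sum_eq_zero fun i _ => integral_fderiv_apply_eq_zero (hV i) (hfg i) _⟩

theorem bilap_mul_mul_sq_eq {ξ η : EuclideanSpace ℝ (Fin N) → ℝ} (hξ : ContDiff ℝ 2 ξ)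
    (hη : ContDiff ℝ 3 η) (x : EuclideanSpace ℝ (Fin N)) :
    lap (lap ξ) x * ξ x * η x ^ 2
      = (lap (fun y => ξ y * η y) x) ^ 2
        + (-4 * (gradDot ξ η x) ^ 2 + 2 * ξ x * lap ξ x * gradDot η η x)
        + ξ x ^ 2 * (2 * gradDot (lap η) η x + (lap η x) ^ 2)
        + (divMulGrad (fun y => ξ y * (η y * η y)) (lap ξ) x
          - divMulGrad (lap ξ) (fun y => ξ y * (η y * η y)) x
          - 2 * divMulGrad (fun y => ξ y * ξ y * lap η y) η x) := by
  have hη2 : ContDiff ℝ 2 η := hη.of_le (by norm_num)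
  have hξ1 : Differentiable ℝ ξ := hξ.differentiable two_ne_zero
  have hη1 : Differentiable ℝ η := hη.differentiable (by norm_num)
  have hlapη : Differentiable ℝ (lap η) :=
    (hη.lap (m := 1) (by norm_num)).differentiable one_ne_zero
  simp only [divMulGrad]
  rw [gradDot_comm (lap ξ), lap_mul hξ hη2, lap_mul hξ (hη2.mul hη2), lap_mul hη2 hη2,
    gradDot_mul_left ((hξ1 x).fun_mul (hξ1 x)) (hlapη x), gradDot_mul_left (hξ1 x) (hξ1 x),
    gradDot_comm ξ (fun y => η y * η y), gradDot_mul_left (hη1 x) (hη1 x), gradDot_comm η ξ]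
  ring

theorem integrable_rhs_integrands {ξ η : EuclideanSpace ℝ (Fin N) → ℝ} (hξ : ContDiff ℝ 2 ξ)
    (hη : ContDiff ℝ 3 η) (hηc : HasCompactSupport η) :
    Integrable (fun x => lap (fun y => ξ y * η y) x ^ 2) ∧
    Integrable (fun x => -4 * gradDot ξ η x ^ 2 + 2 * ξ x * lap ξ x * gradDot η η x) ∧
    Integrable (fun x => ξ x ^ 2 * (2 * gradDot (lap η) η x + lap η x ^ 2)) := by
  have hη2 : ContDiff ℝ 2 η := hη.of_le (by norm_num)
  -- continuity facts from which `fun_prop` assembles that of the three integrands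
  have := ((hξ.mul hη2).lap (m := 0) (by norm_num)).continuous
  have := (hξ.gradDot hη2 (m := 0) (by norm_num)).continuous
  have := (hη2.gradDot hη2 (m := 0) (by norm_num)).continuous
  have := ((hη.lap (m := 1) (by norm_num)).gradDot (hη.of_le (by norm_num)) (m := 0)
    (by norm_num)).continuous
  have := (hξ.lap (m := 0) (by norm_num)).continuous
  have := (hη2.lap (m := 0) (by norm_num)).continuous
  have := hξ.continuous
  have hR (F : EuclideanSpace ℝ (Fin N) → ℝ) (hF : Continuous F)
      (h0 : ∀ x ∉ tsupport η, F x = 0) : Integrable F :=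
    hF.integrable_of_hasCompactSupport (.intro hηc h0)
  refine ⟨hR _ (by fun_prop) fun x hx => ?_, hR _ (by fun_prop) fun x hx => ?_,
    hR _ (by fun_prop) fun x hx => ?_⟩
  · simp [lap_eq_zero_of_notMem_tsupport fun h => hx (tsupport_mul_subset_right h)]
  · simp [gradDot_eq_zero_of_notMem_tsupport hx]
  · simp [gradDot_eq_zero_of_notMem_tsupport hx, lap_eq_zero_of_notMem_tsupport hx]

end

theorem integral_identity_general
    (N : ℕ)
    (ξ η : EuclideanSpace ℝ (Fin N) → ℝ)
    (hξ : ContDiff ℝ 4 ξ) (hη : ContDiff ℝ (⊤ : ℕ∞) η)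
    (hηsupp : HasCompactSupport η) :
    ∫ x, lap (lap ξ) x * ξ x * η x ^ 2
      = (∫ x, (lap (fun y => ξ y * η y) x) ^ 2)
        + (∫ x, (-4 * (gradDot ξ η x) ^ 2 + 2 * ξ x * lap ξ x * gradDot η η x))
        + ∫ x, ξ x ^ 2 * (2 * gradDot (lap η) η x + (lap η x) ^ 2) := by
  have hη4 : ContDiff ℝ 4 η := hη.of_le (by simp [WithTop.le_coe_iff])
  have hlapξ : ContDiff ℝ 2 (lap ξ) := hξ.lap (by norm_num)
  have hφ : ContDiff ℝ 2 fun y => ξ y * (η y * η y) := (hξ.mul (hη4.mul hη4)).of_le (by norm_num)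
  have hφc : HasCompactSupport fun y => ξ y * (η y * η y) := hηsupp.mul_left.mul_left
  have hψ : ContDiff ℝ 2 fun y => ξ y * ξ y * lap η y :=
    ((hξ.mul hξ).of_le (by norm_num)).mul (hη4.lap (by norm_num))
  have hψc : HasCompactSupport fun y => ξ y * ξ y * lap η y := hηsupp.lap.mul_left
  obtain ⟨i1, i2, i3⟩ :=
    integrable_rhs_integrands (hξ.of_le (by norm_num)) (hη4.of_le (by norm_num)) hηsupp
  obtain ⟨d1, z1⟩ := integrable_divMulGrad_and_integral_eq_zero (hφ.of_le one_le_two) hlapξ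
    fun _ => hφc.mul_right
  obtain ⟨d2, z2⟩ := integrable_divMulGrad_and_integral_eq_zero (hlapξ.of_le one_le_two) hφ
    fun _ => (hφc.fderiv_apply ℝ _).mul_left
  obtain ⟨d3, z3⟩ := integrable_divMulGrad_and_integral_eq_zero (hψ.of_le one_le_two)
    (hη4.of_le (by norm_num)) fun _ => hψc.mul_right
  simp_rw [bilap_mul_mul_sq_eq (hξ.of_le (by norm_num)) (hη4.of_le (by norm_num))]
  rw [integral_add ((i1.fun_add i2).fun_add i3) ((d1.sub' d2).sub' (d3.const_mul 2)),
    integral_sub (d1.sub' d2) (d3.const_mul 2), integral_sub d1 d2, integral_const_mul,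
    z1, z2, z3, integral_add (i1.fun_add i2) i3, integral_add i1 i2]
  ring

/-- The integral identity (2.4): for `ξ ∈ C⁴(ℝ^N)` and `η ∈ C_c^∞(ℝ^N)`,
`∫ (Δ²ξ) ξ η² = ∫ [Δ(ξη)]² + ∫ [−4(∇ξ·∇η)² + 2ξ(Δξ)|∇η|²] + ∫ ξ²[2∇(Δη)·∇η + (Δη)²]`. -/
theorem integral_identity
    (N : ℕ) (hN : 1 ≤ N)
    (ξ η : EuclideanSpace ℝ (Fin N) → ℝ)
    (hξ : ContDiff ℝ 4 ξ) (hη : ContDiff ℝ (⊤ : ℕ∞) η)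
    (hηsupp : HasCompactSupport η) :
    ∫ x, lap (lap ξ) x * ξ x * η x ^ 2
      = (∫ x, (lap (fun y => ξ y * η y) x) ^ 2)
        + (∫ x, (-4 * (gradDot ξ η x) ^ 2 + 2 * ξ x * lap ξ x * gradDot η η x))
        + ∫ x, ξ x ^ 2 * (2 * gradDot (lap η) η x + (lap η x) ^ 2) :=
  integral_identity_general N ξ η hξ hη hηsupp
end

section
/- Let p > 1, set L(s) = s⁴ − (32p/(p+1))s² + (32p(p+3)/(p+1)²)s − 64p/(p+1)² and t₀ = √(2p/(p+1)) + √(2p/(p+1) − √(2p/(p+1))). Then L(2t₀) < 0. -/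
/-- The quartic polynomial `L`. -/
noncomputable def Lpoly (p s : ℝ) : ℝ :=
  s ^ 4 - 32 * p / (p + 1) * s ^ 2 + 32 * p * (p + 3) / (p + 1) ^ 2 * s
    - 64 * p / (p + 1) ^ 2

/-- `t₀ = √(2p/(p+1)) + √(2p/(p+1) − √(2p/(p+1)))`. -/
noncomputable def t0 (p : ℝ) : ℝ :=
  Real.sqrt (2 * p / (p + 1)) +
    Real.sqrt (2 * p / (p + 1) - Real.sqrt (2 * p / (p + 1)))

/-- The quartic polynomial `H` from Theorem 1.1. -/
noncomputable def Hpoly (p x : ℝ) : ℝ :=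
  x ^ 4 - 32 * p * (p + 1) / (p - 1) ^ 2 * x ^ 2
    + 32 * p * (p + 1) * (p + 3) / (p - 1) ^ 3 * x
    - 64 * p * (p + 1) ^ 2 / (p - 1) ^ 4

/-!
Put `a = 2p/(p+1)`, so that `p = a/(2-a)` and the coefficients of `L` are polynomials in `a`.
With `r = √a > 1` and `u = √(r² - r)` we have `t₀ = r + u`, and eliminating `u²` gives the
factorisation `L(2t₀) = 16 r² (1 - r²)(2r - 1 + 2u)`, which is negative
since `r > 1` and `u ≥ 0`.
-/

noncomputable def Lquartic (a s : ℝ) : ℝ :=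
  s ^ 4 - 16 * a * s ^ 2 + 16 * a * (3 - a) * s - 16 * a * (2 - a)

theorem Lpoly_eq_Lquartic {p : ℝ} (hp : p + 1 ≠ 0) (s : ℝ) :
    Lpoly p s = Lquartic (2 * p / (p + 1)) s := by
  unfold Lpoly Lquartic
  field_simp
  ring

theorem Lquartic_sq_two_mul_add {r u : ℝ} (hu : u ^ 2 = r ^ 2 - r) :
    Lquartic (r ^ 2) (2 * (r + u)) = 16 * r ^ 2 * (1 - r ^ 2) * (2 * r - 1 + 2 * u) := by
  unfold Lquartic
  linear_combination (16 * u ^ 2 + 64 * r * u + 48 * r ^ 2 - 16 * r) * hu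

theorem Lquartic_sq_two_mul_add_neg {r u : ℝ} (hr : 1 < r) (hu₀ : 0 ≤ u)
    (hu : u ^ 2 = r ^ 2 - r) : Lquartic (r ^ 2) (2 * (r + u)) < 0 := by
  rw [Lquartic_sq_two_mul_add hu]
  have h₁ : 1 - r ^ 2 < 0 := by nlinarith
  have h₂ : 0 < 2 * r - 1 + 2 * u := by linarith
  have h₃ : 0 < 16 * r ^ 2 := by positivity
  exact mul_neg_of_neg_of_pos (mul_neg_of_pos_of_neg h₃ h₁) h₂

theorem one_lt_two_mul_div_add_one {p : ℝ} (hp : 1 < p) : 1 < 2 * p / (p + 1) := by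
  rw [lt_div_iff₀ (by linarith)]
  linarith

/-- `L(2t₀) < 0` for every `p > 1`. -/
theorem Lpoly_neg_at_two_t0 (p : ℝ) (hp : 1 < p) : Lpoly p (2 * t0 p) < 0 := by
  rw [Lpoly_eq_Lquartic (by linarith), t0]
  set a := 2 * p / (p + 1)
  set r := √a
  have ha : 1 < a := one_lt_two_mul_div_add_one hp
  have hr : 1 < r := Real.lt_sqrt_of_sq_lt (by simpa using ha)
  have hra : r ^ 2 = a := Real.sq_sqrt (by linarith)
  have hu : √(r ^ 2 - r) ^ 2 = r ^ 2 - r := Real.sq_sqrt (by nlinarith)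
  rw [← hra]
  exact Lquartic_sq_two_mul_add_neg hr (Real.sqrt_nonneg _) hu
end

section
/- Let p > 1 and let H(x) = x⁴ − (32p(p+1)/(p−1)²)x² + (32p(p+1)(p+3)/(p−1)³)x − 64p(p+1)²/(p−1)⁴. Let x₀ be the largest real root of H (i.e. H(x₀) = 0 and H(x) ≠ 0 for all x > x₀). Then x₀ > 5. -/
/-!
`H` tends to `+∞` and is negative at `x = 5 + 4/(p-1)`, so by the intermediate value theorem it
has a root beyond that point; the largest root lies at least as far out. The point `5` itself
would not do: `H(5) > 0` for `p = 7/5`.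
-/

open Filter Polynomial

theorem lt_of_neg_of_forall_gt_ne_zero {α δ : Type*} [ConditionallyCompleteLinearOrder α]
    [TopologicalSpace α] [OrderTopology α] [DenselyOrdered α] [LinearOrder δ]
    [TopologicalSpace δ] [OrderClosedTopology δ] [Zero δ] {f : α → δ} (hf : Continuous f)
    (htop : Tendsto f atTop atTop) {a x₀ : α} (ha : f a < 0)
    (hx₀ : ∀ x, x₀ < x → f x ≠ 0) : a < x₀ := by
  obtain ⟨c, hac, hc⟩ := intermediate_value_Ioi hf.continuousOn htop ha
  by_contra! hle
  exact hx₀ c (hle.trans_lt hac) hc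

theorem continuous_Hpoly (p : ℝ) : Continuous (Hpoly p) := by
  unfold Hpoly
  fun_prop

theorem tendsto_Hpoly_atTop (p : ℝ) : Tendsto (Hpoly p) atTop atTop := by
  set P : ℝ[X] := X ^ 4 - C (32 * p * (p + 1) / (p - 1) ^ 2) * X ^ 2
    + C (32 * p * (p + 1) * (p + 3) / (p - 1) ^ 3) * X - C (64 * p * (p + 1) ^ 2 / (p - 1) ^ 4)
  have hP : Hpoly p = fun x => P.eval x := by
    ext x
    simp [P, Hpoly]
  have hdeg : P.degree = 4 := by
    simp only [P]
    compute_degree!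
  have hlead : P.leadingCoeff = 1 := by
    simp only [P]
    monicity!
  rw [hP]
  exact tendsto_atTop_of_leadingCoeff_nonneg P (by rw [hdeg]; norm_num) (by rw [hlead]; norm_num)

theorem Hpoly_five_add_four_div_sub_one (p : ℝ) (hp : p ≠ 1) :
    Hpoly p (5 + 4 / (p - 1)) =
      -(15 * (p - 1) ^ 3 + 496 * (p - 1) ^ 2 + 736 * (p - 1) + 256) / (p - 1) ^ 3 := by
  have hq : p - 1 ≠ 0 := sub_ne_zero.2 hp
  unfold Hpoly
  field_simp
  ring

theorem Hpoly_five_add_four_div_sub_one_neg (p : ℝ) (hp : 1 < p) :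
    Hpoly p (5 + 4 / (p - 1)) < 0 := by
  have hq : 0 < p - 1 := by linarith
  rw [Hpoly_five_add_four_div_sub_one p hp.ne', neg_div, neg_lt_zero]
  positivity

theorem largest_root_gt_five_general (p : ℝ) (hp : 1 < p) (x₀ : ℝ)
    (hlargest : ∀ x : ℝ, x₀ < x → Hpoly p x ≠ 0) :
    5 < x₀ := by
  have hbeyond : 5 + 4 / (p - 1) < x₀ :=
    lt_of_neg_of_forall_gt_ne_zero (continuous_Hpoly p) (tendsto_Hpoly_atTop p)
      (Hpoly_five_add_four_div_sub_one_neg p hp) hlargest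
  have hshift : 0 < 4 / (p - 1) := div_pos four_pos (sub_pos.2 hp)
  linarith

/-- The largest real root `x₀` of `H` satisfies `x₀ > 5` for every `p > 1`. -/
theorem largest_root_gt_five (p : ℝ) (hp : 1 < p) (x₀ : ℝ)
    (hroot : Hpoly p x₀ = 0) (hlargest : ∀ x : ℝ, x₀ < x → Hpoly p x ≠ 0) :
    5 < x₀ :=
  largest_root_gt_five_general p hp x₀ hlargest
end

section
/- Let p > 1 and let t > 1 be a real number satisfying t² = √(2p/(p+1)) · (2t − 1). Then (p+1)² · L(2t) = 32p(p−1)(1 − 2t), where L(s) = s⁴ − (32p/(p+1))s² + (32p(p+3)/(p+1)²)s − 64p/(p+1)². In particular L(2t) < 0. -/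
/-! Squaring `t² = √(2p/(p+1)) (2t − 1)` removes the square root; the resulting relation
`(p+1) t⁴ = 2p (2t − 1)²` eliminates the quartic term of `(p+1)² L(2t)`, and what remains
is `32p(p−1)(1−2t)`, linear in `t`. -/

theorem pow_four_eq_of_sq_eq_sqrt_mul {a t u : ℝ} (ha : 0 ≤ a) (ht : t ^ 2 = √a * u) :
    t ^ 4 = a * u ^ 2 := by
  calc t ^ 4 = (t ^ 2) ^ 2 := by ring
    _ = √a ^ 2 * u ^ 2 := by rw [ht]; ring
    _ = a * u ^ 2 := by rw [Real.sq_sqrt ha]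

theorem Lpoly_two_mul_of_pow_four_eq {p t : ℝ} (hp : p + 1 ≠ 0)
    (ht : t ^ 4 = 2 * p / (p + 1) * (2 * t - 1) ^ 2) :
    (p + 1) ^ 2 * Lpoly p (2 * t) = 32 * p * (p - 1) * (1 - 2 * t) := by
  have ht' : (p + 1) * t ^ 4 = 2 * p * (2 * t - 1) ^ 2 := by
    rw [ht]; field_simp
  unfold Lpoly
  field_simp
  linear_combination 16 * (p + 1) * ht'

/-- If `t > 1` satisfies `t² = √(2p/(p+1))(2t−1)`, then
`(p+1)² L(2t) = 32p(p−1)(1−2t)`; in particular `L(2t) < 0`. -/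
theorem Lpoly_at_two_t (p : ℝ) (hp : 1 < p) (t : ℝ) (ht1 : 1 < t)
    (ht : t ^ 2 = Real.sqrt (2 * p / (p + 1)) * (2 * t - 1)) :
    (p + 1) ^ 2 * Lpoly p (2 * t) = 32 * p * (p - 1) * (1 - 2 * t)
      ∧ Lpoly p (2 * t) < 0 := by
  have hp1 : 0 < p + 1 := by linarith
  have key := Lpoly_two_mul_of_pow_four_eq hp1.ne'
    (pow_four_eq_of_sq_eq_sqrt_mul (by positivity) ht)
  refine ⟨key, ?_⟩
  have hrhs : 32 * p * (p - 1) * (1 - 2 * t) < 0 :=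
    mul_neg_of_pos_of_neg (by nlinarith) (by linarith)
  rw [← key] at hrhs
  exact neg_of_mul_neg_right hrhs (by positivity)
end

section
/- Let p > 1, let H(x) = x⁴ − (32p(p+1)/(p−1)²)x² + (32p(p+1)(p+3)/(p−1)³)x − 64p(p+1)²/(p−1)⁴, let x₀ be the largest real root of H, and let t₀ = √(2p/(p+1)) + √(2p/(p+1) − √(2p/(p+1))). Then x₀ > (2(p+1)/(p−1)) · t₀. -/
open Filter Polynomial

theorem tendsto_quartic_atTop (A B C : ℝ) :
    Tendsto (fun x : ℝ => x ^ 4 - A * x ^ 2 + B * x - C) atTop atTop := by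
  set P : ℝ[X] := X ^ 4 - Polynomial.C A * X ^ 2 + Polynomial.C B * X - Polynomial.C C
  have hdeg : P.natDegree = 4 := by simp only [P]; compute_degree!
  have hmonic : P.Monic := by simp only [P]; monicity!
  have h := P.tendsto_atTop_of_leadingCoeff_nonneg
    (by rw [degree_eq_natDegree hmonic.ne_zero, hdeg]; norm_num)
    (by rw [hmonic.leadingCoeff]; norm_num)
  simpa [P] using h

theorem exists_zero_gt_of_neg_of_tendsto_atTop {f : ℝ → ℝ} (hf : Continuous f) {y : ℝ}
    (hy : f y < 0) (htop : Tendsto f atTop atTop) : ∃ z, y < z ∧ f z = 0 := by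
  obtain ⟨M, hM, hyM⟩ := ((htop.eventually_gt_atTop 0).and (eventually_ge_atTop y)).exists
  obtain ⟨z, hz, hfz⟩ := intermediate_value_Ioo hyM hf.continuousOn ⟨hy, hM⟩
  exact ⟨z, hz.1, hfz⟩

theorem quartic_two_mul_add_neg {a b : ℝ} (ha : 1 < a) (hb : 0 < b) (hab : b ^ 2 = a ^ 2 - a) :
    (2 * (a + b)) ^ 4 - 16 * a ^ 2 * (2 * (a + b)) ^ 2
      + 16 * a ^ 2 * (3 - a ^ 2) * (2 * (a + b)) - 16 * a ^ 2 * (2 - a ^ 2) < 0 := by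
  have hreduce : (2 * (a + b)) ^ 4 - 16 * a ^ 2 * (2 * (a + b)) ^ 2
      + 16 * a ^ 2 * (3 - a ^ 2) * (2 * (a + b)) - 16 * a ^ 2 * (2 - a ^ 2)
      = -(16 * a ^ 2 * ((a - 1) * (2 * a - 1) * (a + 1) + 2 * (a ^ 2 - 1) * b)) := by
    linear_combination (16 * b ^ 2 + 64 * a * b + 48 * a ^ 2 - 16 * a) * hab
  rw [hreduce, neg_lt_zero]
  have hcubic : 0 < (a - 1) * (2 * a - 1) * (a + 1) :=
    mul_pos (mul_pos (by linarith) (by linarith)) (by linarith)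
  have hlinear : 0 < 2 * (a ^ 2 - 1) * b := mul_pos (mul_pos two_pos (by nlinarith)) hb
  exact mul_pos (by positivity) (add_pos hcubic hlinear)

theorem Hpoly_div_mul_eq (p s : ℝ) :
    Hpoly p ((p + 1) / (p - 1) * s) = ((p + 1) / (p - 1)) ^ 4 * Lpoly p s := by
  -- at `p = ±1` the junk value `(p + 1) / (p - 1) = 0` makes both sides vanish
  rcases eq_or_ne (p - 1) 0 with h | h
  · simp [Hpoly, h]
  rcases eq_or_ne (p + 1) 0 with h' | h'
  · simp [Hpoly, h']
  rw [Hpoly, Lpoly]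
  field_simp

theorem Lpoly_eq_quartic (p s : ℝ) (hp : p + 1 ≠ 0) :
    Lpoly p s = s ^ 4 - 16 * (2 * p / (p + 1)) * s ^ 2
      + 16 * (2 * p / (p + 1)) * (3 - 2 * p / (p + 1)) * s
      - 16 * (2 * p / (p + 1)) * (2 - 2 * p / (p + 1)) := by
  rw [Lpoly]
  field_simp
  ring

theorem Lpoly_two_mul_t0_neg {p : ℝ} (hp : 1 < p) : Lpoly p (2 * t0 p) < 0 := by
  have hp1 : 0 < p + 1 := by linarith
  rw [Lpoly_eq_quartic p _ hp1.ne']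
  set q := 2 * p / (p + 1)
  have hq : 1 < q := by rw [lt_div_iff₀ hp1]; linarith
  set a := Real.sqrt q
  have ha2 : a ^ 2 = q := Real.sq_sqrt (by linarith)
  have ha : 1 < a := by rw [Real.lt_sqrt zero_le_one]; simpa
  have hqa : 0 < q - a := by nlinarith
  rw [← ha2, show t0 p = a + Real.sqrt (q - a) from rfl]
  exact quartic_two_mul_add_neg ha (Real.sqrt_pos.mpr hqa) (by rw [Real.sq_sqrt hqa.le, ha2])

theorem Hpoly_neg_at_scaled_t0 {p : ℝ} (hp : 1 < p) :
    Hpoly p (2 * (p + 1) / (p - 1) * t0 p) < 0 := by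
  have hm : 0 < p - 1 := by linarith
  have hp1 : 0 < p + 1 := by linarith
  rw [show 2 * (p + 1) / (p - 1) * t0 p = (p + 1) / (p - 1) * (2 * t0 p) by ring, Hpoly_div_mul_eq]
  exact mul_neg_of_pos_of_neg (by positivity) (Lpoly_two_mul_t0_neg hp)

theorem largest_root_gt_general (p : ℝ) (hp : 1 < p) (x₀ : ℝ)
    (hlargest : ∀ x : ℝ, x₀ < x → Hpoly p x ≠ 0) :
    2 * (p + 1) / (p - 1) * t0 p < x₀ := by
  by_contra! hle
  obtain ⟨z, hz, hHz⟩ := exists_zero_gt_of_neg_of_tendsto_atTop (continuous_Hpoly p)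
    (Hpoly_neg_at_scaled_t0 hp) (tendsto_Hpoly_atTop p)
  exact hlargest z (hle.trans_lt hz) hHz

/-- The largest real root `x₀` of `H` satisfies `x₀ > 2(p+1)t₀/(p−1)`. -/
theorem largest_root_gt (p : ℝ) (hp : 1 < p) (x₀ : ℝ)
    (hroot : Hpoly p x₀ = 0) (hlargest : ∀ x : ℝ, x₀ < x → Hpoly p x ≠ 0) :
    2 * (p + 1) / (p - 1) * t0 p < x₀ :=
  largest_root_gt_general p hp x₀ hlargest
end

section
/- Let p > 1 and let s be a real number with s > 1. Set r = s − 1, q = (p+1)s/2 − 1 (so that 2q = (p+1)r + p − 1 and q + 1 = (p+1)(r+1)/2), a₁ = 4q√p/(q+1)², and a₂ = 4r√p/(r+1)². Then a₁·a₂ > 1 if and only if L(s) < 0, where L(s) = s⁴ − (32p/(p+1))s² + (32p(p+3)/(p+1)²)s − 64p/(p+1)². -/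
/-! Since `q + 1 = (p+1)s/2` and `r + 1 = s`, the inequality `a₁a₂ > 1` reads
`((p+1)s²/2)² < 16pqr`, and clearing the denominators of `L` shows
`(p+1)² L(s) = (p+1)² s⁴ − 64pqr`. -/

theorem mul_sq_sqrt_div_sq (p q r : ℝ) (hp : 0 ≤ p) :
    4 * q * Real.sqrt p / (q + 1) ^ 2 * (4 * r * Real.sqrt p / (r + 1) ^ 2)
      = 16 * p * q * r / ((q + 1) * (r + 1)) ^ 2 := by
  rw [div_mul_div_comm, mul_pow]
  congr 1
  linear_combination 16 * q * r * Real.mul_self_sqrt hp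

theorem sq_add_one_mul_Lpoly (p s : ℝ) (hp : p + 1 ≠ 0) :
    (p + 1) ^ 2 * Lpoly p s
      = ((p + 1) * s ^ 2) ^ 2 - 32 * p * ((p + 1) * s - 2) * (s - 1) := by
  unfold Lpoly
  field_simp
  ring

/-- With `r = s − 1`, `q = (p+1)s/2 − 1`, `a₁ = 4q√p/(q+1)²` and `a₂ = 4r√p/(r+1)²`,
one has `a₁a₂ > 1` if and only if `L(s) < 0`. -/
theorem a1a2_gt_one_iff (p : ℝ) (hp : 1 < p) (s : ℝ) (hs : 1 < s)
    (r q a₁ a₂ : ℝ) (hr : r = s - 1) (hq : q = (p + 1) * s / 2 - 1)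
    (ha₁ : a₁ = 4 * q * Real.sqrt p / (q + 1) ^ 2)
    (ha₂ : a₂ = 4 * r * Real.sqrt p / (r + 1) ^ 2) :
    1 < a₁ * a₂ ↔ Lpoly p s < 0 := by
  have hden : 0 < ((q + 1) * (r + 1)) ^ 2 := by
    have hqr : (q + 1) * (r + 1) = (p + 1) * s ^ 2 / 2 := by rw [hq, hr]; ring
    rw [hqr]
    positivity
  rw [ha₁, ha₂, mul_sq_sqrt_div_sq p q r (by linarith), one_lt_div hden,
    ← smul_neg_iff_of_pos_left (by positivity : (0 : ℝ) < (p + 1) ^ 2), smul_eq_mul,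
    sq_add_one_mul_Lpoly p s (by linarith), hq, hr]
  constructor <;> intro h <;> linarith
end
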